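/- Let (A,B) be a nonempty weakly compact convex pair in a Banach space X. Then the pair (A₀,B₀) is nonempty, convex, and dist(A₀,B₀) = dist(A,B), where A₀ = {u ∈ A : ‖u − v‖ = dist(A,B) for some v ∈ B} and B₀ = {v ∈ B : ‖u − v‖ = dist(A,B) for some u ∈ A}. -/

import Mathlib

open Pointwise

/-- `dist(A,B) = inf{‖a - b‖ : a ∈ A, b ∈ B}`. -/
noncomputable def setDist {X : Type*} [NormedAddCommGroup X] (A B : Set X) : ℝ :=
  sInf {r | ∃ a ∈ A, ∃ b ∈ B, r = ‖a - b‖}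

lemma weakSpace_t2 {X : Type*} [NormedAddCommGroup X] [NormedSpace ℝ X] :
    T2Space (WeakSpace ℝ X) := by
  refine T2Space.of_injective_continuous
    (f := fun (x : WeakSpace ℝ X) (f : X →L[ℝ] ℝ) => f ((toWeakSpace ℝ X).symm x)) ?_ ?_
  · intro x y hxy
    apply (toWeakSpace ℝ X).symm.injective
    exact (NormedSpace.eq_iff_forall_dual_eq ℝ).mpr fun g => congrFun hxy g
  · refine continuous_pi fun f => ?_
    exact WeakBilin.eval_continuous (topDualPairing ℝ X).flip f

lemma setDist_le {X : Type*} [NormedAddCommGroup X] {A B : Set X} {a b : X}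
    (ha : a ∈ A) (hb : b ∈ B) : setDist A B ≤ ‖a - b‖ := by
  apply csInf_le
  · exact ⟨0, fun r ⟨x, _, y, _, hr⟩ => hr ▸ norm_nonneg _⟩
  · exact ⟨a, ha, b, hb, rfl⟩

lemma le_setDist {X : Type*} [NormedAddCommGroup X] {A B : Set X} {c : ℝ}
    (hA : A.Nonempty) (hB : B.Nonempty) (h : ∀ a ∈ A, ∀ b ∈ B, c ≤ ‖a - b‖) :
    c ≤ setDist A B := by
  rw [setDist]
  refine le_csInf ⟨‖hA.choose - hB.choose‖, hA.choose, hA.choose_spec, hB.choose,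
    hB.choose_spec, rfl⟩ ?_
  rintro r ⟨x, hx, y, hy, rfl⟩
  exact h x hx y hy

lemma setDist_attained {X : Type*} [NormedAddCommGroup X] [NormedSpace ℝ X]
    (A B : Set X) (hA : A.Nonempty) (hB : B.Nonempty)
    (hAconv : Convex ℝ A) (hBconv : Convex ℝ B)
    (hAwc : IsCompact (toWeakSpace ℝ X '' A)) (hBwc : IsCompact (toWeakSpace ℝ X '' B)) :
    ∃ a ∈ A, ∃ b ∈ B, ‖a - b‖ = setDist A B := by
  haveI : T2Space (WeakSpace ℝ X) := weakSpace_t2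
  set S : Set ℝ := {r | ∃ a ∈ A, ∃ b ∈ B, r = ‖a - b‖} with hS
  have hSne : S.Nonempty := ⟨‖hA.choose - hB.choose‖, hA.choose, hA.choose_spec,
    hB.choose, hB.choose_spec, rfl⟩
  have hSbd : BddBelow S := ⟨0, fun r ⟨x, _, y, _, hr⟩ => hr ▸ norm_nonneg _⟩
  have hdS : setDist A B = sInf S := rfl
  set C : Set X := A - B with hC
  have hCconv : Convex ℝ C := hAconv.sub hBconv
  have hCwc : IsCompact (toWeakSpace ℝ X '' C) := by
    have h1 : IsCompact ((fun p : WeakSpace ℝ X × WeakSpace ℝ X => p.1 - p.2) ''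
        ((toWeakSpace ℝ X '' A) ×ˢ (toWeakSpace ℝ X '' B))) :=
      (hAwc.prod hBwc).image (continuous_fst.sub continuous_snd)
    convert h1 using 1
    ext x
    constructor
    · rintro ⟨w, hw, rfl⟩
      rw [Set.mem_sub] at hw
      obtain ⟨p, hp, q, hq, rfl⟩ := hw
      exact ⟨(toWeakSpace ℝ X p, toWeakSpace ℝ X q),
        ⟨⟨p, hp, rfl⟩, ⟨q, hq, rfl⟩⟩, (map_sub (toWeakSpace ℝ X) p q).symm⟩
    · rintro ⟨⟨p1, p2⟩, ⟨⟨p, hp, rfl⟩, ⟨q, hq, rfl⟩⟩, rfl⟩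
      exact ⟨p - q, Set.sub_mem_sub hp hq, map_sub (toWeakSpace ℝ X) p q⟩
  have hCcl : IsClosed C := by
    have h1 : IsClosed (toWeakSpace ℝ X '' C) := hCwc.isClosed
    have h2 : C = toWeakSpaceCLM ℝ X ⁻¹' (toWeakSpace ℝ X '' C) := by
      ext x
      constructor
      · intro hx; exact ⟨x, hx, rfl⟩
      · rintro ⟨y, hy, hxy⟩
        rwa [(toWeakSpace ℝ X).injective hxy] at hy
    rw [h2]
    exact h1.preimage (toWeakSpaceCLM ℝ X).continuous
  set t : ℕ → Set X := fun n => C ∩ Metric.closedBall 0 (sInf S + 1 / (n + 1)) with ht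
  have htconv : ∀ n, Convex ℝ (t n) := fun n => hCconv.inter (convex_closedBall 0 _)
  have htcl : ∀ n, IsClosed (t n) := fun n => hCcl.inter Metric.isClosed_closedBall
  have htne : ∀ n, (t n).Nonempty := by
    intro n
    obtain ⟨r, hrS, hrlt⟩ := Real.lt_sInf_add_pos hSne
      (by positivity : (0:ℝ) < 1 / (n + 1))
    obtain ⟨p, hp, q, hq, rfl⟩ := hrS
    exact ⟨p - q, Set.sub_mem_sub hp hq, by
      rw [mem_closedBall_zero_iff]; exact hrlt.le⟩
  set K : ℕ → Set (WeakSpace ℝ X) := fun n => toWeakSpace ℝ X '' t n with hK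
  have hKcl : ∀ n, IsClosed (K n) := by
    intro n
    have := (htconv n).toWeakSpace_closure (𝕜 := ℝ)
    rw [(htcl n).closure_eq] at this
    show IsClosed (toWeakSpace ℝ X '' t n)
    rw [this]; exact isClosed_closure
  have hKcompact : ∀ n, IsCompact (K n) :=
    fun n => hCwc.of_isClosed_subset (hKcl n) (Set.image_mono Set.inter_subset_left)
  have hKmono : ∀ n, K (n + 1) ⊆ K n := by
    intro n
    apply Set.image_mono
    apply Set.inter_subset_inter_right
    apply Metric.closedBall_subset_closedBall
    have h1 : (1:ℝ) / (n + 1 + 1) ≤ 1 / (n + 1) := by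
      apply one_div_le_one_div_of_le
      · positivity
      · linarith
    push_cast
    linarith
  have hKne : ∀ n, (K n).Nonempty := fun n => ((htne n).image _)
  obtain ⟨x, hx⟩ := IsCompact.nonempty_iInter_of_sequence_nonempty_isCompact_isClosed
    K hKmono hKne (hKcompact 0) hKcl
  simp only [Set.mem_iInter] at hx
  obtain ⟨w, hw0, rfl⟩ := hx 0
  have hwmem : ∀ n, w ∈ t n := by
    intro n
    obtain ⟨w', hw', hww⟩ := hx n
    rwa [(toWeakSpace ℝ X).injective hww] at hw'
  have hwle : ‖w‖ ≤ sInf S := by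
    refine le_of_forall_pos_le_add fun ε hε => ?_
    obtain ⟨n, hn⟩ := exists_nat_one_div_lt hε
    have := (hwmem n).2
    rw [mem_closedBall_zero_iff] at this
    calc ‖w‖ ≤ sInf S + 1 / (n + 1) := this
      _ ≤ sInf S + ε := by linarith
  obtain ⟨p, hp, q, hq, rfl⟩ := Set.mem_sub.mp hw0.1
  refine ⟨p, hp, q, hq, ?_⟩
  rw [hdS]
  exact le_antisymm hwle (csInf_le hSbd ⟨p, hp, q, hq, rfl⟩)

/-- For a nonempty weakly compact convex pair `(A,B)` in a Banach space, the pair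
`(A₀,B₀)` is nonempty and convex, and `dist(A₀,B₀) = dist(A,B)`. -/
theorem proximal_pair_nonempty_convex {X : Type*}
    [NormedAddCommGroup X] [NormedSpace ℝ X] [CompleteSpace X]
    (A B : Set X) (hA : A.Nonempty) (hB : B.Nonempty)
    (hAconv : Convex ℝ A) (hBconv : Convex ℝ B)
    (hAwc : IsCompact (toWeakSpace ℝ X '' A)) (hBwc : IsCompact (toWeakSpace ℝ X '' B)) :
    ({u | u ∈ A ∧ ∃ v ∈ B, ‖u - v‖ = setDist A B}.Nonempty ∧
      {v | v ∈ B ∧ ∃ u ∈ A, ‖u - v‖ = setDist A B}.Nonempty) ∧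
    (Convex ℝ {u | u ∈ A ∧ ∃ v ∈ B, ‖u - v‖ = setDist A B} ∧
      Convex ℝ {v | v ∈ B ∧ ∃ u ∈ A, ‖u - v‖ = setDist A B}) ∧
    setDist {u | u ∈ A ∧ ∃ v ∈ B, ‖u - v‖ = setDist A B}
        {v | v ∈ B ∧ ∃ u ∈ A, ‖u - v‖ = setDist A B} = setDist A B := by
  obtain ⟨a, ha, b, hb, hab⟩ := setDist_attained A B hA hB hAconv hBconv hAwc hBwc
  set d := setDist A B with hd
  have haA0 : a ∈ {u | u ∈ A ∧ ∃ v ∈ B, ‖u - v‖ = d} := ⟨ha, b, hb, hab⟩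
  have hbB0 : b ∈ {v | v ∈ B ∧ ∃ u ∈ A, ‖u - v‖ = d} := ⟨hb, a, ha, hab⟩
  refine ⟨⟨⟨a, haA0⟩, ⟨b, hbB0⟩⟩, ⟨?_, ?_⟩, ?_⟩
  · rintro u₁ ⟨hu₁, v₁, hv₁, h1⟩ u₂ ⟨hu₂, v₂, hv₂, h2⟩ t s ht hs hts
    refine ⟨hAconv hu₁ hu₂ ht hs hts, t • v₁ + s • v₂, hBconv hv₁ hv₂ ht hs hts, ?_⟩
    have hle : ‖(t • u₁ + s • u₂) - (t • v₁ + s • v₂)‖ ≤ d := by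
      have : (t • u₁ + s • u₂) - (t • v₁ + s • v₂) = t • (u₁ - v₁) + s • (u₂ - v₂) := by
        module
      rw [this]
      calc ‖t • (u₁ - v₁) + s • (u₂ - v₂)‖ ≤ ‖t • (u₁ - v₁)‖ + ‖s • (u₂ - v₂)‖ :=
            norm_add_le _ _
        _ = t * d + s * d := by
            rw [norm_smul, norm_smul, h1, h2, Real.norm_of_nonneg ht, Real.norm_of_nonneg hs]
        _ = d := by linear_combination d * hts
    exact le_antisymm hle (setDist_le (hAconv hu₁ hu₂ ht hs hts) (hBconv hv₁ hv₂ ht hs hts))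
  · rintro v₁ ⟨hv₁, u₁, hu₁, h1⟩ v₂ ⟨hv₂, u₂, hu₂, h2⟩ t s ht hs hts
    refine ⟨hBconv hv₁ hv₂ ht hs hts, t • u₁ + s • u₂, hAconv hu₁ hu₂ ht hs hts, ?_⟩
    have hle : ‖(t • u₁ + s • u₂) - (t • v₁ + s • v₂)‖ ≤ d := by
      have : (t • u₁ + s • u₂) - (t • v₁ + s • v₂) = t • (u₁ - v₁) + s • (u₂ - v₂) := by
        module
      rw [this]
      calc ‖t • (u₁ - v₁) + s • (u₂ - v₂)‖ ≤ ‖t • (u₁ - v₁)‖ + ‖s • (u₂ - v₂)‖ :=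
            norm_add_le _ _
        _ = t * d + s * d := by
            rw [norm_smul, norm_smul, h1, h2, Real.norm_of_nonneg ht, Real.norm_of_nonneg hs]
        _ = d := by linear_combination d * hts
    exact le_antisymm hle (setDist_le (hAconv hu₁ hu₂ ht hs hts) (hBconv hv₁ hv₂ ht hs hts))
  · refine le_antisymm ((setDist_le haA0 hbB0).trans_eq hab) ?_
    refine le_setDist ⟨a, haA0⟩ ⟨b, hbB0⟩ ?_
    rintro u ⟨huA, -⟩ v ⟨hvB, -⟩
    exact setDist_le huA hvB
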